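/- arXiv:2106.05090 — 3 statements merged into one kernel-verified Lean document; each statement's English description precedes it below -/
import Mathlib

section
/- The space H_n of homogeneous polynomials of degree n in two variables decomposes as the direct sum of the span of x^n and the image of T_n; equivalently, for every q ∈ H_n there exists p ∈ H_n and α ∈ ℝ such that T_n(p) + q = α·x^n. -/
/-! Since `T(x^(a+1) y^(b-1)) = (a+1) x^a y^b` and `a + 1` is invertible in characteristic zero,
every monomial of degree `n` except `x^n` lies in the image of `T`; by linearity of `T` the
monomials of `q` can then be handled one at a time. -/

open MvPolynomial

namespace MvPolynomial

variable {σ : Type*}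

theorem X_mul_pderiv_monomial_add_single {R : Type*} [CommSemiring R] (i j : σ)
    (e : σ →₀ ℕ) (c : R) :
    X j * pderiv i (monomial (e + Finsupp.single i 1) c)
      = monomial (e + Finsupp.single j 1) (c * (e i + 1)) := by
  classical
  rw [pderiv_monomial, add_tsub_cancel_right, X, monomial_mul, add_comm (Finsupp.single j 1)]
  simp

theorem exists_isHomogeneous_X_mul_pderiv_eq_monomial {K : Type*} [Field K] [CharZero K]
    (i j : σ) {d : σ →₀ ℕ} (hd : d j ≠ 0) (c : K) :
    ∃ p : MvPolynomial σ K, p.IsHomogeneous d.degree ∧ X j * pderiv i p = monomial d c := by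
  obtain ⟨e, rfl⟩ : ∃ e, d = e + Finsupp.single j 1 :=
    ⟨d - Finsupp.single j 1, (tsub_add_cancel_of_le (Finsupp.single_le_iff.mpr
      (Nat.one_le_iff_ne_zero.mpr hd))).symm⟩
  refine ⟨monomial (e + Finsupp.single i 1) (c / (e i + 1)), isHomogeneous_monomial _ ?_, ?_⟩
  · simp
  · rw [X_mul_pderiv_monomial_add_single, div_mul_cancel₀ _ (Nat.cast_add_one_ne_zero _)]

theorem eq_single_zero_of_apply_one_eq_zero {d : Fin 2 →₀ ℕ} (hd : d 1 = 0) :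
    d = Finsupp.single 0 d.degree := by
  ext i
  fin_cases i <;> simp [Finsupp.degree_eq_sum, hd]

theorem exists_X_one_mul_pderiv_zero_add_monomial_eq_smul_X_zero_pow {K : Type*} [Field K]
    [CharZero K] (d : Fin 2 →₀ ℕ) (c : K) :
    ∃ p : MvPolynomial (Fin 2) K, p.IsHomogeneous d.degree ∧
      ∃ α : K, X 1 * pderiv 0 p + monomial d c = α • X 0 ^ d.degree := by
  by_cases hd : d 1 = 0
  · refine ⟨0, isHomogeneous_zero _ _ _, c, ?_⟩
    rw [map_zero, mul_zero, zero_add, X_pow_eq_monomial, smul_monomial, smul_eq_mul, mul_one,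
      ← eq_single_zero_of_apply_one_eq_zero hd]
  · obtain ⟨p, hp, hTp⟩ := exists_isHomogeneous_X_mul_pderiv_eq_monomial 0 1 hd c
    refine ⟨-p, hp.neg, 0, ?_⟩
    rw [map_neg, mul_neg, hTp, neg_add_cancel, zero_smul]

end MvPolynomial

/-- `H_n = span{x^n} ⊕ Im T_n`: for every homogeneous `q` of degree `n` there is a
homogeneous `p` of degree `n` and `α : ℝ` with `T_n(p) + q = α • x^n`. -/
theorem span_xn_plus_image_Tn (n : ℕ) (q : MvPolynomial (Fin 2) ℝ)
    (hq : q.IsHomogeneous n) :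
    ∃ p : MvPolynomial (Fin 2) ℝ, p.IsHomogeneous n ∧
      ∃ α : ℝ, (X 1 : MvPolynomial (Fin 2) ℝ) * pderiv 0 p + q
        = α • (X 0 : MvPolynomial (Fin 2) ℝ) ^ n := by
  rw [q.as_sum]
  refine Finset.sum_induction _ (fun r => ∃ p : MvPolynomial (Fin 2) ℝ, p.IsHomogeneous n ∧
      ∃ α : ℝ, X 1 * pderiv 0 p + r = α • X 0 ^ n) ?_ ⟨0, isHomogeneous_zero _ _ _, 0, by simp⟩ ?_
  · rintro q₁ q₂ ⟨p₁, hp₁, α₁, h₁⟩ ⟨p₂, hp₂, α₂, h₂⟩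
    refine ⟨p₁ + p₂, hp₁.add hp₂, α₁ + α₂, ?_⟩
    rw [map_add, mul_add, add_smul, ← h₁, ← h₂]
    ring
  · intro d hd
    obtain rfl : d.degree = n := by
      rw [Finsupp.degree_eq_weight_one]; exact hq (mem_support_iff.mp hd)
    exact exists_X_one_mul_pderiv_zero_add_monomial_eq_smul_X_zero_pow d _
end

section
/- For n odd and (Cs, Sn) the generalized trigonometric functions with period T, the function G(θ) = Cs(θ)^{n−1} / (n·(1 − (n−1)·Sn(θ)^2)) is nonnegative, continuous, not identically zero, and its integral over [0, T] is strictly positive. -/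
/-!
Differentiating shows that `Cs ^ (2n) + n Sn ^ 2` is conserved, hence equal to `1`. So
`1 - (n - 1) Sn ^ 2 = Cs ^ (2n) + Sn ^ 2`, a sum of an even power and a square which cannot
vanish, and the denominator of `G` is positive. As `n - 1` is even, `G` is nonnegative;
it is continuous, and `G 0 = 1 / n > 0`, so its integral over `[0, T]` is positive.
-/

open Set

namespace GeneralizedTrig

variable {n : ℕ} {Cs Sn : ℝ → ℝ}

theorem energy_eq_initial (hCs : ∀ θ, HasDerivAt Cs (-(Sn θ)) θ)
    (hSn : ∀ θ, HasDerivAt Sn (Cs θ ^ (2 * n - 1)) θ) (θ : ℝ) :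
    Cs θ ^ (2 * n) + n * Sn θ ^ 2 = Cs 0 ^ (2 * n) + n * Sn 0 ^ 2 := by
  have hderiv : ∀ x, HasDerivAt (fun x => Cs x ^ (2 * n) + n * Sn x ^ 2) 0 x := fun x =>
    (((hCs x).fun_pow (2 * n)).fun_add (((hSn x).fun_pow 2).const_mul (n : ℝ))).congr_deriv
      (by push_cast; ring)
  exact is_const_of_deriv_eq_zero (fun x => (hderiv x).differentiableAt)
    (fun x => (hderiv x).deriv) θ 0

theorem one_sub_mul_sq_pos_of_pow_add_mul_sq_eq_one {c s : ℝ}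
    (h : c ^ (2 * n) + n * s ^ 2 = 1) : 0 < 1 - ((n : ℝ) - 1) * s ^ 2 := by
  have hc : 0 ≤ c ^ (2 * n) := (even_two_mul n).pow_nonneg c
  by_contra! hle
  have hc0 : c ^ (2 * n) = 0 := by nlinarith [sq_nonneg s]
  have hs0 : s ^ 2 = 0 := by nlinarith [sq_nonneg s]
  simp [hc0, hs0] at h

theorem one_sub_mul_Sn_sq_pos (hCs : ∀ θ, HasDerivAt Cs (-(Sn θ)) θ)
    (hSn : ∀ θ, HasDerivAt Sn (Cs θ ^ (2 * n - 1)) θ) (hCs0 : Cs 0 = 1) (hSn0 : Sn 0 = 0)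
    (θ : ℝ) : 0 < 1 - ((n : ℝ) - 1) * Sn θ ^ 2 :=
  one_sub_mul_sq_pos_of_pow_add_mul_sq_eq_one <| by
    simpa [hCs0, hSn0] using energy_eq_initial hCs hSn θ

/-- The function `G` of the paper. -/
noncomputable def G (n : ℕ) (Cs Sn : ℝ → ℝ) (θ : ℝ) : ℝ :=
  Cs θ ^ (n - 1) / ((n : ℝ) * (1 - ((n : ℝ) - 1) * Sn θ ^ 2))

theorem G_nonneg (hodd : Odd n) {θ : ℝ} (hden : 0 ≤ 1 - ((n : ℝ) - 1) * Sn θ ^ 2) :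
    0 ≤ G n Cs Sn θ :=
  div_nonneg ((Nat.Odd.sub_odd hodd odd_one).pow_nonneg _) (mul_nonneg n.cast_nonneg hden)

theorem continuous_G (hCs : Continuous Cs) (hSn : Continuous Sn) (hn : n ≠ 0)
    (hden : ∀ θ, 0 < 1 - ((n : ℝ) - 1) * Sn θ ^ 2) : Continuous (G n Cs Sn) :=
  (hCs.pow _).div (continuous_const.mul (continuous_const.sub (continuous_const.mul (hSn.pow 2))))
    fun θ => mul_ne_zero (Nat.cast_ne_zero.2 hn) (hden θ).ne'

theorem G_zero (hCs0 : Cs 0 = 1) (hSn0 : Sn 0 = 0) : G n Cs Sn 0 = (n : ℝ)⁻¹ := by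
  simp [G, hCs0, hSn0]

end GeneralizedTrig

open GeneralizedTrig in
theorem G_nonneg_and_integral_pos_general (n : ℕ) (hodd : Odd n) (Cs Sn : ℝ → ℝ)
    (hCs : ∀ θ, HasDerivAt Cs (-(Sn θ)) θ)
    (hSn : ∀ θ, HasDerivAt Sn (Cs θ ^ (2 * n - 1)) θ)
    (hCs0 : Cs 0 = 1) (hSn0 : Sn 0 = 0)
    (T : ℝ) (hT : 0 < T) :
    (∀ θ : ℝ, 0 ≤ Cs θ ^ (n - 1) / ((n : ℝ) * (1 - ((n : ℝ) - 1) * Sn θ ^ 2)))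
    ∧ Continuous (fun θ : ℝ => Cs θ ^ (n - 1) / ((n : ℝ) * (1 - ((n : ℝ) - 1) * Sn θ ^ 2)))
    ∧ (∃ θ : ℝ, Cs θ ^ (n - 1) / ((n : ℝ) * (1 - ((n : ℝ) - 1) * Sn θ ^ 2)) ≠ 0)
    ∧ 0 < ∫ θ in (0 : ℝ)..T, Cs θ ^ (n - 1) / ((n : ℝ) * (1 - ((n : ℝ) - 1) * Sn θ ^ 2)) := by
  have hden := one_sub_mul_Sn_sq_pos hCs hSn hCs0 hSn0
  have hnonneg : ∀ θ, 0 ≤ G n Cs Sn θ := fun θ => G_nonneg hodd (hden θ).le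
  have hcont : Continuous (G n Cs Sn) :=
    continuous_G (continuous_iff_continuousAt.2 fun θ => (hCs θ).continuousAt)
      (continuous_iff_continuousAt.2 fun θ => (hSn θ).continuousAt) hodd.pos.ne' hden
  have hG0 : 0 < G n Cs Sn 0 := by
    rw [G_zero hCs0 hSn0]
    exact inv_pos.2 (Nat.cast_pos.2 hodd.pos)
  exact ⟨hnonneg, hcont, ⟨0, hG0.ne'⟩, intervalIntegral.integral_pos hT hcont.continuousOn
    (fun θ _ => hnonneg θ) ⟨0, left_mem_Icc.2 hT.le, hG0⟩⟩

/-- For `n` odd, `G θ = Cs θ^(n−1) / (n(1 − (n−1)Sn θ²))` is nonnegative, continuous,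
not identically zero, and has strictly positive integral over `[0, T]`. -/
theorem G_nonneg_and_integral_pos (n : ℕ) (hn : 1 ≤ n) (hodd : Odd n) (Cs Sn : ℝ → ℝ)
    (hCs : ∀ θ, HasDerivAt Cs (-(Sn θ)) θ)
    (hSn : ∀ θ, HasDerivAt Sn (Cs θ ^ (2 * n - 1)) θ)
    (hCs0 : Cs 0 = 1) (hSn0 : Sn 0 = 0)
    (T : ℝ) (hT : 0 < T)
    (hCsper : Function.Periodic Cs T) (hSnper : Function.Periodic Sn T) :
    (∀ θ : ℝ, 0 ≤ Cs θ ^ (n - 1) / ((n : ℝ) * (1 - ((n : ℝ) - 1) * Sn θ ^ 2)))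
    ∧ Continuous (fun θ : ℝ => Cs θ ^ (n - 1) / ((n : ℝ) * (1 - ((n : ℝ) - 1) * Sn θ ^ 2)))
    ∧ (∃ θ : ℝ, Cs θ ^ (n - 1) / ((n : ℝ) * (1 - ((n : ℝ) - 1) * Sn θ ^ 2)) ≠ 0)
    ∧ 0 < ∫ θ in (0 : ℝ)..T, Cs θ ^ (n - 1) / ((n : ℝ) * (1 - ((n : ℝ) - 1) * Sn θ ^ 2)) :=
  G_nonneg_and_integral_pos_general n hodd Cs Sn hCs hSn hCs0 hSn0 T hT
end

section
/- For the generalized trigonometric functions with period T, the integral from 0 to T of Cs(θ)^{3n+1} dθ equals (n+2) times the integral from 0 to T of Cs(θ)^{n+1}·Sn(θ)^2 dθ. -/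
/-! Since `Sn' = Cs^(2n-1)` and `Cs' = -Sn`, the derivative of `Cs^(n+2) · Sn` is
`Cs^(3n+1) - (n+2) · Cs^(n+1) · Sn²`. As `Cs^(n+2) · Sn` is `T`-periodic, this derivative
integrates to zero over a period. -/

open Function intervalIntegral

theorem integral_eq_zero_of_hasDerivAt_of_periodic {E : Type*} [NormedAddCommGroup E]
    [NormedSpace ℝ E] [CompleteSpace E] {F f : ℝ → E} {T : ℝ}
    (hF : ∀ x, HasDerivAt F (f x) x) (hf : IntervalIntegrable f MeasureTheory.volume 0 T)
    (hper : Periodic F T) : ∫ x in (0 : ℝ)..T, f x = 0 := by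
  rw [integral_eq_sub_of_hasDerivAt (fun x _ => hF x) hf, ← zero_add T, hper 0, sub_self]

theorem hasDerivAt_Cs_pow_mul_Sn {n : ℕ} (hn : 1 ≤ n) {Cs Sn : ℝ → ℝ}
    (hCs : ∀ θ, HasDerivAt Cs (-(Sn θ)) θ) (hSn : ∀ θ, HasDerivAt Sn (Cs θ ^ (2 * n - 1)) θ)
    (θ : ℝ) :
    HasDerivAt (fun θ => Cs θ ^ (n + 2) * Sn θ)
      (Cs θ ^ (3 * n + 1) - ((n : ℝ) + 2) * (Cs θ ^ (n + 1) * Sn θ ^ 2)) θ := by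
  refine (((hCs θ).pow (n + 2)).mul (hSn θ)).congr_deriv ?_
  have hexp : 3 * n + 1 = (n + 2) + (2 * n - 1) := by omega
  rw [hexp, pow_add (Cs θ), Pi.pow_apply, show n + 2 - 1 = n + 1 by omega]
  push_cast
  ring

theorem integral_Cs_pow_eq_general (n : ℕ) (hn : 1 ≤ n) (Cs Sn : ℝ → ℝ)
    (hCs : ∀ θ, HasDerivAt Cs (-(Sn θ)) θ)
    (hSn : ∀ θ, HasDerivAt Sn (Cs θ ^ (2 * n - 1)) θ)
    (T : ℝ)
    (hCsper : Function.Periodic Cs T) (hSnper : Function.Periodic Sn T) :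
    ∫ θ in (0 : ℝ)..T, Cs θ ^ (3 * n + 1)
      = ((n : ℝ) + 2) * ∫ θ in (0 : ℝ)..T, Cs θ ^ (n + 1) * Sn θ ^ 2 := by
  have hCsc : Continuous Cs := continuous_iff_continuousAt.2 fun θ => (hCs θ).continuousAt
  have hSnc : Continuous Sn := continuous_iff_continuousAt.2 fun θ => (hSn θ).continuousAt
  have hper : Periodic (fun θ => Cs θ ^ (n + 2) * Sn θ) T := fun θ => by
    simp only [hCsper θ, hSnper θ]
  have hzero := integral_eq_zero_of_hasDerivAt_of_periodic
    (hasDerivAt_Cs_pow_mul_Sn hn hCs hSn) ((by fun_prop : Continuous _).intervalIntegrable _ _) hper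
  rw [integral_sub ((by fun_prop : Continuous _).intervalIntegrable _ _)
    ((by fun_prop : Continuous _).intervalIntegrable _ _), integral_const_mul] at hzero
  exact sub_eq_zero.1 hzero

/-- `∫₀^T Cs^(3n+1) = (n+2) · ∫₀^T Cs^(n+1) Sn²`. -/
theorem integral_Cs_pow_eq (n : ℕ) (hn : 1 ≤ n) (Cs Sn : ℝ → ℝ)
    (hCs : ∀ θ, HasDerivAt Cs (-(Sn θ)) θ)
    (hSn : ∀ θ, HasDerivAt Sn (Cs θ ^ (2 * n - 1)) θ)
    (hCs0 : Cs 0 = 1) (hSn0 : Sn 0 = 0)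
    (T : ℝ) (hT : 0 < T)
    (hCsper : Function.Periodic Cs T) (hSnper : Function.Periodic Sn T) :
    ∫ θ in (0 : ℝ)..T, Cs θ ^ (3 * n + 1)
      = ((n : ℝ) + 2) * ∫ θ in (0 : ℝ)..T, Cs θ ^ (n + 1) * Sn θ ^ 2 :=
  integral_Cs_pow_eq_general n hn Cs Sn hCs hSn T hCsper hSnper
end
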